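/- Let ρ̂ = {ρ_n} be a sequence of density operators and σ̂ = {σ_n} a sequence of positive semidefinite Hermitian operators. For every ε ∈ [0,1], the quantities D̄(ε|ρ̂‖σ̂) := inf{a : limsup_n Tr ρ_n {ρ_n − e^{na}σ_n > 0} ≤ ε} and C̄(ε|ρ̂‖σ̂) := inf{a : limsup_n Tr(ρ_n − e^{na}σ_n)₊ ≤ ε} coincide: D̄(ε|ρ̂‖σ̂) = C̄(ε|ρ̂‖σ̂). -/

import Mathlib

open Matrix
open scoped ComplexOrder

open Classical in
/-- The positive part `A₊` of a Hermitian matrix `A`, defined via the spectral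
decomposition (and `0` if `A` is not Hermitian). -/
noncomputable def posPartOf {n : Type*} [Fintype n] [DecidableEq n] (A : Matrix n n ℂ) :
    Matrix n n ℂ :=
  if hA : A.IsHermitian then
    (hA.eigenvectorUnitary : Matrix n n ℂ) *
      Matrix.diagonal (fun i => ((max (hA.eigenvalues i) 0 : ℝ) : ℂ)) *
      (star (hA.eigenvectorUnitary : Matrix n n ℂ))
  else 0

open Classical in
/-- The negative part `A₋` of a Hermitian matrix `A` (so that `A = A₊ - A₋`). -/
noncomputable def negPartOf {n : Type*} [Fintype n] [DecidableEq n] (A : Matrix n n ℂ) :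
    Matrix n n ℂ :=
  if hA : A.IsHermitian then
    (hA.eigenvectorUnitary : Matrix n n ℂ) *
      Matrix.diagonal (fun i => ((max (-(hA.eigenvalues i)) 0 : ℝ) : ℂ)) *
      (star (hA.eigenvectorUnitary : Matrix n n ℂ))
  else 0

open Classical in
/-- The spectral projection `{A > 0}` onto the strictly positive eigenspaces of a
Hermitian matrix `A` (and `0` if `A` is not Hermitian). -/
noncomputable def posProjOf {n : Type*} [Fintype n] [DecidableEq n] (A : Matrix n n ℂ) :
    Matrix n n ℂ :=
  if hA : A.IsHermitian then
    (hA.eigenvectorUnitary : Matrix n n ℂ) *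
      Matrix.diagonal (fun i => if 0 < hA.eigenvalues i then (1 : ℂ) else 0) *
      (star (hA.eigenvectorUnitary : Matrix n n ℂ))
  else 0

open Classical in
/-- The trace norm of a Hermitian matrix: the sum of absolute values of eigenvalues. -/
noncomputable def traceNormOf {n : Type*} [Fintype n] [DecidableEq n] (A : Matrix n n ℂ) : ℝ :=
  if hA : A.IsHermitian then ∑ i, |hA.eigenvalues i| else 0
/-- The spectral divergence rate `D̲(ε|ρ̂‖σ̂)`. -/
noncomputable def Dlow {ι : ℕ → Type*} [∀ n, Fintype (ι n)] [∀ n, DecidableEq (ι n)]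
    (ε : ℝ) (ρ σ : ∀ n, Matrix (ι n) (ι n) ℂ) : ℝ :=
  sSup {a : ℝ | 1 - ε ≤
    Filter.liminf (fun n : ℕ =>
      ((ρ n * posProjOf (ρ n - Real.exp (n * a) • σ n)).trace).re) Filter.atTop}

/-- The spectral divergence rate `D̄(ε|ρ̂‖σ̂)`. -/
noncomputable def Dhigh {ι : ℕ → Type*} [∀ n, Fintype (ι n)] [∀ n, DecidableEq (ι n)]
    (ε : ℝ) (ρ σ : ∀ n, Matrix (ι n) (ι n) ℂ) : ℝ :=
  sInf {a : ℝ |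
    Filter.limsup (fun n : ℕ =>
      ((ρ n * posProjOf (ρ n - Real.exp (n * a) • σ n)).trace).re) Filter.atTop ≤ ε}
/-- The alternative spectral divergence rate `C̄(ε|ρ̂‖σ̂)` of Bowen–Datta, via positive parts. -/
noncomputable def Chigh {ι : ℕ → Type*} [∀ n, Fintype (ι n)] [∀ n, DecidableEq (ι n)]
    (ε : ℝ) (ρ σ : ∀ n, Matrix (ι n) (ι n) ℂ) : ℝ :=
  sInf {a : ℝ |
    Filter.limsup (fun n : ℕ =>
      ((posPartOf (ρ n - Real.exp (n * a) • σ n)).trace).re) Filter.atTop ≤ ε}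

/-! Write `A = ρ - cσ` and `P = {A > 0}`. Since `A P = A₊` and `σ ≥ 0`,
`Tr A₊ = Tr ρ P - c Tr σ P ≤ Tr ρ P`, so every rate admissible for `D̄` is admissible for `C̄`.
Conversely, for `P' = {ρ - c'σ > 0}` one has `Tr (ρ - cσ) P' ≤ Tr (ρ - cσ)₊` because `0 ≤ P' ≤ 1`,
and `c' Tr σ P' ≤ Tr ρ P' ≤ 1` because `(ρ - c'σ) P' ≥ 0`; hence
`Tr ρ P' ≤ Tr (ρ - cσ)₊ + c / c'`. With `c = e^{na}` and `c' = e^{n(a+δ)}` the error term is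
`e^{-nδ} → 0`, so `a + δ` is admissible for `D̄` whenever `a` is admissible for `C̄`, and the two
infima agree. -/

open scoped MatrixOrder
open Filter Topology

namespace Matrix

lemma PosSemidef.re_trace_nonneg {n : Type*} [Fintype n] {B : Matrix n n ℂ} (hB : B.PosSemidef) :
    0 ≤ B.trace.re :=
  (Complex.nonneg_iff.mp hB.trace_nonneg).1

lemma IsHermitian.sub_smul {n : Type*} {ρ σ : Matrix n n ℂ} (hρ : ρ.IsHermitian)
    (hσ : σ.IsHermitian) (c : ℝ) : (ρ - c • σ).IsHermitian :=
  hρ.sub (hσ.smul (IsSelfAdjoint.all c))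

variable {n : Type*} [Fintype n] [DecidableEq n]

lemma PosSemidef.re_trace_mul_nonneg {B C : Matrix n n ℂ} (hB : B.PosSemidef)
    (hC : C.PosSemidef) : 0 ≤ (B * C).trace.re := by
  set S := CFC.sqrt B
  have hS : Sᴴ = S := (CFC.sqrt_nonneg B).isSelfAdjoint
  have hSCS : (S * C * S).PosSemidef := by simpa only [hS] using hC.mul_mul_conjTranspose_same S
  rw [← CFC.sqrt_mul_sqrt_self B hB.nonneg, ← trace_mul_cycle]
  exact hSCS.re_trace_nonneg

lemma PosSemidef.re_trace_mul_le {B P : Matrix n n ℂ} (hB : B.PosSemidef) (hP : P ≤ 1) :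
    (B * P).trace.re ≤ B.trace.re := by
  have hsplit : B.trace.re = (B * P).trace.re + (B * (1 - P)).trace.re := by
    rw [← Complex.add_re, ← trace_add, ← mul_add, add_sub_cancel, mul_one]
  linarith [hB.re_trace_mul_nonneg (le_iff.mp hP)]

lemma IsHermitian.cfc_eq_mul_diagonal {A : Matrix n n ℂ} (hA : A.IsHermitian) (f : ℝ → ℝ) :
    cfc f A = (hA.eigenvectorUnitary : Matrix n n ℂ) *
      diagonal (fun i => (f (hA.eigenvalues i) : ℂ)) *
      star (hA.eigenvectorUnitary : Matrix n n ℂ) := by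
  rw [hA.cfc_eq, IsHermitian.cfc, Unitary.conjStarAlgAut_apply]
  rfl

variable {A : Matrix n n ℂ}

lemma posPartOf_eq_posPart (hA : A.IsHermitian) : posPartOf A = A⁺ := by
  rw [CFC.posPart_def, cfcₙ_eq_cfc, hA.cfc_eq_mul_diagonal, posPartOf, dif_pos hA]
  rfl

lemma posProjOf_eq_cfc (hA : A.IsHermitian) :
    posProjOf A = cfc (Set.indicator (Set.Ioi (0 : ℝ)) 1) A := by
  rw [hA.cfc_eq_mul_diagonal, posProjOf, dif_pos hA]
  simp only [Set.indicator_apply, Set.mem_Ioi, Pi.one_apply, apply_ite, Complex.ofReal_one,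
    Complex.ofReal_zero]

lemma posProjOf_nonneg (hA : A.IsHermitian) : 0 ≤ posProjOf A := by
  rw [posProjOf_eq_cfc hA]
  exact cfc_nonneg fun x _ => Set.indicator_nonneg (fun _ _ => zero_le_one) x

lemma posProjOf_le_one (hA : A.IsHermitian) : posProjOf A ≤ 1 := by
  rw [posProjOf_eq_cfc hA]
  exact cfc_le_one _ _ fun x _ => Set.indicator_le_self' (fun _ _ => zero_le_one) x

lemma mul_posProjOf (hA : A.IsHermitian) : A * posProjOf A = posPartOf A := by
  have hcont (f : ℝ → ℝ) : ContinuousOn f (spectrum ℝ A) := A.finite_real_spectrum.continuousOn f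
  calc A * posProjOf A = cfc id A * cfc (Set.indicator (Set.Ioi (0 : ℝ)) 1) A := by
        rw [posProjOf_eq_cfc hA, cfc_id ℝ A hA.isSelfAdjoint]
    _ = cfc (·⁺ : ℝ → ℝ) A := by
        rw [← cfc_mul _ _ _ (hcont _) (hcont _)]
        refine cfc_congr fun x _ => ?_
        by_cases hx : 0 < x
        · simp [hx, hx.le]
        · simp [hx, not_lt.mp hx]
    _ = posPartOf A := by rw [posPartOf_eq_posPart hA, CFC.posPart_def, cfcₙ_eq_cfc]

lemma re_trace_posPartOf_nonneg (hA : A.IsHermitian) : 0 ≤ (posPartOf A).trace.re := by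
  rw [posPartOf_eq_posPart hA]
  exact (CFC.posPart_nonneg A).posSemidef.re_trace_nonneg

lemma re_trace_mul_le_re_trace_posPartOf (hA : A.IsHermitian) {P : Matrix n n ℂ} (hP₀ : 0 ≤ P)
    (hP₁ : P ≤ 1) : (A * P).trace.re ≤ (posPartOf A).trace.re := by
  have hsplit : (A * P).trace.re = (A⁺ * P).trace.re - (A⁻ * P).trace.re := by
    rw [← Complex.sub_re, ← trace_sub, ← sub_mul, CFC.posPart_sub_negPart A hA.isSelfAdjoint]
  have hneg : 0 ≤ (A⁻ * P).trace.re :=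
    (CFC.negPart_nonneg A).posSemidef.re_trace_mul_nonneg hP₀.posSemidef
  rw [posPartOf_eq_posPart hA]
  linarith [(CFC.posPart_nonneg A).posSemidef.re_trace_mul_le hP₁]

variable {ρ σ : Matrix n n ℂ}

lemma re_trace_mul_posProjOf_nonneg (hρ : ρ.PosSemidef) (hA : A.IsHermitian) :
    0 ≤ (ρ * posProjOf A).trace.re :=
  hρ.re_trace_mul_nonneg (posProjOf_nonneg hA).posSemidef

lemma re_trace_mul_posProjOf_le_one (hρ : ρ.PosSemidef) (hρtr : ρ.trace = 1)
    (hA : A.IsHermitian) : (ρ * posProjOf A).trace.re ≤ 1 := by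
  simpa [hρtr] using hρ.re_trace_mul_le (posProjOf_le_one hA)

lemma re_trace_mul_eq (ρ σ P : Matrix n n ℂ) (c : ℝ) :
    (ρ * P).trace.re = ((ρ - c • σ) * P).trace.re + c * (σ * P).trace.re := by
  simp [sub_mul, trace_sub, Complex.real_smul]

lemma re_trace_posPartOf_le (hρ : ρ.IsHermitian) (hσ : σ.PosSemidef) {c : ℝ} (hc : 0 ≤ c) :
    (posPartOf (ρ - c • σ)).trace.re ≤ (ρ * posProjOf (ρ - c • σ)).trace.re := by
  have hA := hρ.sub_smul hσ.1 c
  rw [re_trace_mul_eq ρ σ _ c, mul_posProjOf hA]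
  have := hσ.re_trace_mul_nonneg (posProjOf_nonneg hA).posSemidef
  nlinarith

lemma re_trace_mul_posProjOf_le_add_div (hρ : ρ.PosSemidef) (hρtr : ρ.trace = 1)
    (hσ : σ.PosSemidef) {c c' : ℝ} (hc : 0 ≤ c) (hc' : 0 < c') :
    (ρ * posProjOf (ρ - c' • σ)).trace.re ≤ (posPartOf (ρ - c • σ)).trace.re + c / c' := by
  have hA' := hρ.1.sub_smul hσ.1 c'
  set P := posProjOf (ρ - c' • σ)
  have hσP : c' * (σ * P).trace.re ≤ 1 := by
    have hρP : (ρ * P).trace.re ≤ 1 := re_trace_mul_posProjOf_le_one hρ hρtr hA'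
    have hA'P : 0 ≤ ((ρ - c' • σ) * P).trace.re := by
      rw [mul_posProjOf hA']
      exact re_trace_posPartOf_nonneg hA'
    linarith [re_trace_mul_eq ρ σ P c']
  have hcσP : c * (σ * P).trace.re ≤ c / c' := by
    rw [le_div_iff₀ hc', mul_right_comm, mul_assoc]
    exact (mul_le_mul_of_nonneg_left hσP hc).trans_eq (mul_one c)
  linarith [re_trace_mul_eq ρ σ P c, re_trace_mul_le_re_trace_posPartOf (hρ.1.sub_smul hσ.1 c)
    (posProjOf_nonneg hA') (posProjOf_le_one hA')]

end Matrix

lemma Real.sInf_eq_sInf_of_forall_add_mem {S T : Set ℝ} (hST : S ⊆ T)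
    (hTS : ∀ a ∈ T, ∀ δ > 0, a + δ ∈ S) : sInf S = sInf T := by
  rcases T.eq_empty_or_nonempty with rfl | ⟨a₀, ha₀⟩
  · rw [Set.subset_empty_iff.mp hST]
  by_cases hT : BddBelow T
  · refine le_antisymm ?_ (csInf_le_csInf hT ⟨_, hTS a₀ ha₀ 1 one_pos⟩ hST)
    refine le_csInf ⟨a₀, ha₀⟩ fun a ha => le_of_forall_pos_le_add fun δ hδ => ?_
    exact csInf_le (hT.mono hST) (hTS a ha δ hδ)
  · have hS : ¬ BddBelow S := fun ⟨m, hm⟩ =>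
      hT ⟨m - 1, fun a ha => by linarith [hm (hTS a ha 1 one_pos)]⟩
    rw [Real.sInf_of_not_bddBelow hS, Real.sInf_of_not_bddBelow hT]

section SpectralRates

open Matrix

variable {ι : ℕ → Type*} [∀ n, Fintype (ι n)] [∀ n, DecidableEq (ι n)]
  {ρ σ : ∀ n, Matrix (ι n) (ι n) ℂ}

lemma limsup_re_trace_posPartOf_le (hρ : ∀ n, (ρ n).PosSemidef) (hρtr : ∀ n, (ρ n).trace = 1)
    (hσ : ∀ n, (σ n).PosSemidef) (a : ℝ) :
    limsup (fun n : ℕ => (posPartOf (ρ n - Real.exp (n * a) • σ n)).trace.re) atTop ≤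
      limsup (fun n : ℕ => (ρ n * posProjOf (ρ n - Real.exp (n * a) • σ n)).trace.re) atTop := by
  have hA (n : ℕ) := (hρ n).1.sub_smul (hσ n).1 (Real.exp (n * a))
  refine limsup_le_limsup (.of_forall fun n => ?_) ?_ ?_
  · exact re_trace_posPartOf_le (hρ n).1 (hσ n) (Real.exp_pos _).le
  · exact isBoundedUnder_of ⟨0, fun n => re_trace_posPartOf_nonneg (hA n)⟩ |>.isCoboundedUnder_le
  · exact isBoundedUnder_of ⟨1, fun n => re_trace_mul_posProjOf_le_one (hρ n) (hρtr n) (hA n)⟩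

lemma limsup_re_trace_mul_posProjOf_le (hρ : ∀ n, (ρ n).PosSemidef)
    (hρtr : ∀ n, (ρ n).trace = 1) (hσ : ∀ n, (σ n).PosSemidef) (a : ℝ) {δ : ℝ} (hδ : 0 < δ) :
    limsup (fun n : ℕ =>
        (ρ n * posProjOf (ρ n - Real.exp (n * (a + δ)) • σ n)).trace.re) atTop ≤
      limsup (fun n : ℕ => (posPartOf (ρ n - Real.exp (n * a) • σ n)).trace.re) atTop := by
  set g := fun n : ℕ => (posPartOf (ρ n - Real.exp (n * a) • σ n)).trace.re
  set r := fun n : ℕ => Real.exp (-δ) ^ n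
  have hA (b : ℝ) (n : ℕ) := (hρ n).1.sub_smul (hσ n).1 (Real.exp (n * b))
  have hg₀ (n : ℕ) : 0 ≤ g n := re_trace_posPartOf_nonneg (hA a n)
  have hg₁ (n : ℕ) : g n ≤ 1 := (re_trace_posPartOf_le (hρ n).1 (hσ n) (Real.exp_pos _).le).trans
    (re_trace_mul_posProjOf_le_one (hρ n) (hρtr n) (hA a n))
  have hr : Tendsto r atTop (𝓝 0) := tendsto_pow_atTop_nhds_zero_of_lt_one (Real.exp_pos _).le
    (Real.exp_lt_one_iff.mpr (neg_lt_zero.mpr hδ))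
  calc _ ≤ limsup (g + r) atTop := by
        refine limsup_le_limsup (.of_forall fun n => ?_) ?_ ?_
        · have hcc : Real.exp (n * a) / Real.exp (n * (a + δ)) = Real.exp (-δ) ^ n := by
            rw [← Real.exp_sub, ← Real.exp_nat_mul]
            ring_nf
          simpa [hcc] using re_trace_mul_posProjOf_le_add_div (hρ n) (hρtr n) (hσ n)
            (Real.exp_pos (n * a)).le (Real.exp_pos (n * (a + δ)))
        · exact isBoundedUnder_of ⟨0, fun n => re_trace_mul_posProjOf_nonneg (hρ n) (hA _ n)⟩
            |>.isCoboundedUnder_le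
        · exact isBoundedUnder_le_add (isBoundedUnder_of ⟨1, hg₁⟩) hr.isBoundedUnder_le
    _ ≤ limsup g atTop + limsup r atTop :=
        limsup_add_le (isBoundedUnder_of ⟨0, hg₀⟩) (isBoundedUnder_of ⟨1, hg₁⟩)
          hr.isCoboundedUnder_le hr.isBoundedUnder_le
    _ = limsup g atTop := by rw [hr.limsup_eq, add_zero]

end SpectralRates

theorem Dhigh_eq_Chigh_general {ι : ℕ → Type*} [∀ n, Fintype (ι n)] [∀ n, DecidableEq (ι n)]
    (ρ σ : ∀ n, Matrix (ι n) (ι n) ℂ)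
    (hρ : ∀ n, (ρ n).PosSemidef) (hρtr : ∀ n, (ρ n).trace = 1)
    (hσ : ∀ n, (σ n).PosSemidef)
    (ε : ℝ) :
    Dhigh ε ρ σ = Chigh ε ρ σ :=
  Real.sInf_eq_sInf_of_forall_add_mem
    (fun a ha => (limsup_re_trace_posPartOf_le hρ hρtr hσ a).trans ha)
    (fun a ha _ hδ => (limsup_re_trace_mul_posProjOf_le hρ hρtr hσ a hδ).trans ha)

/-- For sequences of density operators `ρ̂` and positive semidefinite operators `σ̂`,
`D̄(ε|ρ̂‖σ̂) = C̄(ε|ρ̂‖σ̂)` for every `ε ∈ [0,1]`. -/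
theorem Dhigh_eq_Chigh {ι : ℕ → Type*} [∀ n, Fintype (ι n)] [∀ n, DecidableEq (ι n)]
    (ρ σ : ∀ n, Matrix (ι n) (ι n) ℂ)
    (hρ : ∀ n, (ρ n).PosSemidef) (hρtr : ∀ n, (ρ n).trace = 1)
    (hσ : ∀ n, (σ n).PosSemidef)
    (ε : ℝ) (hε : ε ∈ Set.Icc (0 : ℝ) 1) :
    Dhigh ε ρ σ = Chigh ε ρ σ :=
  Dhigh_eq_Chigh_general ρ σ hρ hρtr hσ ε
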